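/- Let A ⊆ ℝ be an open invex set with respect to η : A × A → ℝ and a, b ∈ A with a < a + η(b,a), with f′ integrable on [a, a+η(b,a)]. Suppose f : A → ℝ is differentiable and |f′|^q is preinvex on A for some fixed q > 1 with 1/p + 1/q = 1. Then for α ∈ (0,1]: |(f(a)+f(a+η(b,a)))/2 − (Γ(α+1)/(2 η(b,a)^α))[J_{a+}^α f(a+η(b,a)) + J_{(a+η(b,a))−}^α f(a)]| ≤ (η(b,a)/(2(αp+1)^{1/p})) ((|f′(a)|^q + |f′(b)|^q)/2)^{1/q}. -/

import Mathlib

open MeasureTheory intervalIntegral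

/-- Riemann-Liouville left fractional integral `J_{a+}^α f(x)`. -/
noncomputable def JL (α a x : ℝ) (f : ℝ → ℝ) : ℝ :=
  (1 / Real.Gamma α) * ∫ t in a..x, (x - t) ^ (α - 1) * f t

/-- Riemann-Liouville right fractional integral `J_{b-}^α f(x)`. -/
noncomputable def JR (α x b : ℝ) (f : ℝ → ℝ) : ℝ :=
  (1 / Real.Gamma α) * ∫ t in x..b, (t - x) ^ (α - 1) * f t

/-- `A` is invex with respect to `η`. -/
def InvexSet (A : Set ℝ) (η : ℝ → ℝ → ℝ) : Prop :=
  ∀ x ∈ A, ∀ y ∈ A, ∀ t ∈ Set.Icc (0:ℝ) 1, x + t * η y x ∈ A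

/-- `f` is preinvex with respect to `η` on `A`. -/
def PreinvexOn (A : Set ℝ) (η : ℝ → ℝ → ℝ) (f : ℝ → ℝ) : Prop :=
  ∀ x ∈ A, ∀ y ∈ A, ∀ t ∈ Set.Icc (0:ℝ) 1,
    f (x + t * η y x) ≤ (1 - t) * f x + t * f y

/-- Condition C of Mohan and Neogy. -/
def CondC (A : Set ℝ) (η : ℝ → ℝ → ℝ) : Prop :=
  ∀ x ∈ A, ∀ y ∈ A, ∀ t ∈ Set.Icc (0:ℝ) 1,
    η y (y + t * η x y) = -t * η x y ∧ η x (y + t * η x y) = (1 - t) * η x y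

/-!
Integrating by parts against the weight `w(u) = (c - u)^α - (u - a)^α`, `c = a + η(b,a)`, turns
the left-hand side into `|∫ₐᶜ w f'| / (2 η(b,a)^α)`, which Hölder's inequality splits.
Subadditivity of `t ↦ t^α` gives `|w(u)| ≤ |c + a - 2u|^α`, whose `p`-th power integrates to
`η(b,a)^(αp+1) / (αp+1)`; preinvexity bounds `|f'|^q` on `[a, c]` by the linear interpolation of
`|f'(a)|^q` and `|f'(b)|^q`, whose integral is `η(b,a) (|f'(a)|^q + |f'(b)|^q) / 2`.
-/

open Set

lemma abs_rpow_sub_rpow_le_abs_sub_rpow {α x y : ℝ} (hα₀ : 0 ≤ α) (hα₁ : α ≤ 1)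
    (hx : 0 ≤ x) (hy : 0 ≤ y) : |x ^ α - y ^ α| ≤ |x - y| ^ α := by
  wlog hyx : y ≤ x generalizing x y
  · rw [abs_sub_comm, abs_sub_comm x y]
    exact this hy hx (le_of_not_ge hyx)
  have hsub := Real.rpow_add_le_add_rpow hy (sub_nonneg.2 hyx) hα₀ hα₁
  rw [add_sub_cancel] at hsub
  rw [abs_of_nonneg (sub_nonneg.2 (Real.rpow_le_rpow hy hyx hα₀)),
    abs_of_nonneg (sub_nonneg.2 hyx)]
  linarith

lemma integral_abs_rpow_of_nonneg {d r : ℝ} (hd : 0 ≤ d) (hr : 0 ≤ r) :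
    ∫ x in (0 : ℝ)..d, |x| ^ r = d ^ (r + 1) / (r + 1) := by
  rw [integral_congr fun x hx => by rw [abs_of_nonneg (uIcc_of_le hd ▸ hx).1],
    integral_rpow (Or.inl (by linarith)), Real.zero_rpow (by linarith), sub_zero]

lemma integral_abs_add_sub_two_mul_rpow {a c r : ℝ} (hac : a ≤ c) (hr : 0 ≤ r) :
    ∫ u in a..c, |c + a - 2 * u| ^ r = (c - a) ^ (r + 1) / (r + 1) := by
  have hcont : Continuous fun x : ℝ => |x| ^ r := continuous_abs.rpow_const fun _ => Or.inr hr
  have hneg : ∫ x in -(c - a)..0, |x| ^ r = ∫ x in (0 : ℝ)..c - a, |x| ^ r := by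
    simpa only [abs_neg, neg_zero] using
      (integral_comp_neg (a := 0) (b := c - a) fun x => |x| ^ r).symm
  rw [integral_comp_sub_mul (fun x => |x| ^ r) two_ne_zero,
    show c + a - 2 * c = -(c - a) by ring, show c + a - 2 * a = c - a by ring,
    ← integral_add_adjacent_intervals
      (hcont.intervalIntegrable _ 0) (hcont.intervalIntegrable 0 _), hneg,
    integral_abs_rpow_of_nonneg (sub_nonneg.2 hac) hr, smul_eq_mul]
  ring

lemma integral_linear_interpolation {a c x y : ℝ} (hac : a ≠ c) :
    ∫ u in a..c, ((1 - (u - a) / (c - a)) * x + (u - a) / (c - a) * y) =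
      (c - a) * ((x + y) / 2) := by
  have hca : c - a ≠ 0 := sub_ne_zero.2 hac.symm
  have hlin : ∀ v : ℝ, (1 - v / (c - a)) * x + v / (c - a) * y = x + (y - x) / (c - a) * v :=
    fun v => by field_simp; ring
  rw [integral_comp_sub_right (fun v => (1 - v / (c - a)) * x + v / (c - a) * y), sub_self]
  simp only [hlin]
  rw [intervalIntegral.integral_add intervalIntegrable_const
      ((continuous_const_mul _).intervalIntegrable _ _), intervalIntegral.integral_const_mul,
    integral_id, intervalIntegral.integral_const, smul_eq_mul]
  field_simp
  ring

lemma intervalIntegrable_sub_rpow {a c r : ℝ} (hr : -1 < r) :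
    IntervalIntegrable (fun u => (c - u) ^ r) volume a c := by
  simpa using ((intervalIntegrable_rpow' (a := 0) (b := c - a) hr).comp_sub_left c).symm

lemma intervalIntegrable_rpow_sub {a c r : ℝ} (hr : -1 < r) :
    IntervalIntegrable (fun u => (u - a) ^ r) volume a c := by
  simpa using (intervalIntegrable_rpow' (a := 0) (b := c - a) hr).comp_sub_right a

lemma continuous_sub_rpow_sub_rpow_sub {α a c : ℝ} (hα : 0 ≤ α) :
    Continuous fun u : ℝ => (c - u) ^ α - (u - a) ^ α :=
  ((continuous_const.sub continuous_id).rpow_const fun _ => Or.inr hα).sub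
    ((continuous_id.sub continuous_const).rpow_const fun _ => Or.inr hα)

lemma integral_rpow_sub_rpow_mul_deriv {f : ℝ → ℝ} {α a c : ℝ} (hac : a ≤ c) (hα : 0 < α)
    (hf : ∀ x ∈ Icc a c, DifferentiableAt ℝ f x)
    (hf' : IntervalIntegrable (deriv f) volume a c) :
    ∫ u in a..c, ((c - u) ^ α - (u - a) ^ α) * deriv f u =
      α * (∫ u in a..c, ((c - u) ^ (α - 1) + (u - a) ^ (α - 1)) * f u) -
        (c - a) ^ α * (f a + f c) := by
  have hw' : ∀ x ∈ Ioo (min a c) (max a c),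
      HasDerivWithinAt (fun u => (c - u) ^ α - (u - a) ^ α)
        (-α * ((c - x) ^ (α - 1) + (x - a) ^ (α - 1))) (Ioi x) x := by
    rw [min_eq_left hac, max_eq_right hac]
    intro x hx
    have h₁ := ((hasDerivAt_id x).const_sub c).rpow_const (p := α)
      (Or.inl (by simp; linarith [hx.2]))
    have h₂ := ((hasDerivAt_id x).sub_const a).rpow_const (p := α)
      (Or.inl (by simp; linarith [hx.1]))
    exact (h₁.sub h₂).hasDerivWithinAt.congr_deriv (by simp only [id]; ring)
  have hff' : ∀ x ∈ Ioo (min a c) (max a c), HasDerivWithinAt f (deriv f x) (Ioi x) x := by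
    rw [min_eq_left hac, max_eq_right hac]
    exact fun x hx => (hf x (Ioo_subset_Icc_self hx)).hasDerivAt.hasDerivWithinAt
  have hfc : ContinuousOn f (uIcc a c) := by
    rw [uIcc_of_le hac]
    exact fun x hx => (hf x hx).continuousAt.continuousWithinAt
  have hker : IntervalIntegrable (fun u => (c - u) ^ (α - 1) + (u - a) ^ (α - 1)) volume a c :=
    (intervalIntegrable_sub_rpow (by linarith)).add (intervalIntegrable_rpow_sub (by linarith))
  rw [integral_mul_deriv_eq_deriv_mul_of_hasDeriv_right
    (continuous_sub_rpow_sub_rpow_sub hα.le).continuousOn hfc hw' hff' (hker.const_mul _) hf']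
  simp_rw [mul_assoc, intervalIntegral.integral_const_mul, sub_self, Real.zero_rpow hα.ne']
  ring

lemma JL_add_JR {f : ℝ → ℝ} {α a c : ℝ} (hα : 0 < α) (hf : ContinuousOn f (uIcc a c)) :
    JL α a c f + JR α a c f =
      1 / Real.Gamma α * ∫ u in a..c, ((c - u) ^ (α - 1) + (u - a) ^ (α - 1)) * f u := by
  simp_rw [JL, JR, add_mul, ← mul_add]
  rw [intervalIntegral.integral_add
    ((intervalIntegrable_sub_rpow (by linarith)).mul_continuousOn hf)
    ((intervalIntegrable_rpow_sub (by linarith)).mul_continuousOn hf)]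

lemma fractional_trapezoid_identity {f : ℝ → ℝ} {α a c : ℝ} (hac : a < c) (hα : 0 < α)
    (hf : ∀ x ∈ Icc a c, DifferentiableAt ℝ f x)
    (hf' : IntervalIntegrable (deriv f) volume a c) :
    (f a + f c) / 2 - Real.Gamma (α + 1) / (2 * (c - a) ^ α) * (JL α a c f + JR α a c f) =
      -(1 / (2 * (c - a) ^ α)) * ∫ u in a..c, ((c - u) ^ α - (u - a) ^ α) * deriv f u := by
  have hfc : ContinuousOn f (uIcc a c) := by
    rw [uIcc_of_le hac.le]
    exact fun x hx => (hf x hx).continuousAt.continuousWithinAt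
  have hΓ := Real.Gamma_pos_of_pos hα
  have hca := Real.rpow_pos_of_pos (sub_pos.2 hac) α
  rw [JL_add_JR hα hfc, integral_rpow_sub_rpow_mul_deriv hac.le hα hf hf',
    Real.Gamma_add_one hα.ne']
  field_simp
  ring

lemma abs_integral_mul_le_of_rpow_le {X : Type*} [MeasurableSpace X] {μ : Measure X}
    {p q : ℝ} (hpq : p.HolderConjugate q) {f g F G : X → ℝ} (hf : AEStronglyMeasurable f μ)
    (hg : AEStronglyMeasurable g μ) (hF : Integrable F μ) (hG : Integrable G μ)
    (hfF : ∀ᵐ x ∂μ, |f x| ^ p ≤ F x) (hgG : ∀ᵐ x ∂μ, |g x| ^ q ≤ G x) :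
    |∫ x, f x * g x ∂μ| ≤ (∫ x, F x ∂μ) ^ (1 / p) * (∫ x, G x ∂μ) ^ (1 / q) := by
  have memLp {r : ℝ} (hr : 0 < r) {h H : X → ℝ} (hh : AEStronglyMeasurable h μ)
      (hH : Integrable H μ) (hhH : ∀ᵐ x ∂μ, |h x| ^ r ≤ H x) :
      Integrable (fun x => ‖h x‖ ^ r) μ ∧ MemLp h (ENNReal.ofReal r) μ := by
    have hint : Integrable (fun x => ‖h x‖ ^ r) μ :=
      hH.mono' (hh.norm.aemeasurable.pow_const r).aestronglyMeasurable
        (hhH.mono fun x hx => by rwa [Real.norm_of_nonneg (by positivity)])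
    refine ⟨hint, (integrable_norm_rpow_iff hh (by simpa using hr) ENNReal.ofReal_ne_top).1 ?_⟩
    rwa [ENNReal.toReal_ofReal hr.le]
  obtain ⟨hfp, hfLp⟩ := memLp hpq.pos hf hF hfF
  obtain ⟨hgq, hgLq⟩ := memLp hpq.symm.pos hg hG hgG
  calc |∫ x, f x * g x ∂μ| ≤ ∫ x, ‖f x‖ * ‖g x‖ ∂μ := by
        simpa only [Real.norm_eq_abs, abs_mul] using
          norm_integral_le_integral_norm (μ := μ) (fun x => f x * g x)
    _ ≤ (∫ x, ‖f x‖ ^ p ∂μ) ^ (1 / p) * (∫ x, ‖g x‖ ^ q ∂μ) ^ (1 / q) :=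
        integral_mul_norm_le_Lp_mul_Lq hpq hfLp hgLq
    _ ≤ (∫ x, F x ∂μ) ^ (1 / p) * (∫ x, G x ∂μ) ^ (1 / q) := by
        simp only [Real.norm_eq_abs] at hfp hgq ⊢
        have hF₀ : 0 ≤ ∫ x, F x ∂μ :=
          integral_nonneg_of_ae (hfF.mono fun x hx => (by positivity : 0 ≤ |f x| ^ p).trans hx)
        exact mul_le_mul
          (Real.rpow_le_rpow (integral_nonneg fun x => by positivity)
            (integral_mono_ae hfp hF hfF) hpq.one_div_nonneg)
          (Real.rpow_le_rpow (integral_nonneg fun x => by positivity)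
            (integral_mono_ae hgq hG hgG) hpq.symm.one_div_nonneg)
          (by positivity) (Real.rpow_nonneg hF₀ _)

lemma abs_integral_rpow_sub_rpow_mul_le {g : ℝ → ℝ} {α a c p q x y : ℝ} (hac : a < c)
    (hα₀ : 0 < α) (hα₁ : α ≤ 1) (hpq : p.HolderConjugate q)
    (hg : AEStronglyMeasurable g (volume.restrict (Ioc a c)))
    (hgq : ∀ u ∈ Icc a c, |g u| ^ q ≤ (1 - (u - a) / (c - a)) * x + (u - a) / (c - a) * y) :
    |∫ u in a..c, ((c - u) ^ α - (u - a) ^ α) * g u| ≤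
      (c - a) ^ (α + 1) / (α * p + 1) ^ (1 / p) * ((x + y) / 2) ^ (1 / q) := by
  have hp := hpq.pos
  have hwp : ∀ u ∈ Icc a c, |(c - u) ^ α - (u - a) ^ α| ^ p ≤ |c + a - 2 * u| ^ (α * p) := by
    intro u hu
    rw [Real.rpow_mul (abs_nonneg _)]
    refine Real.rpow_le_rpow (abs_nonneg _) ?_ hpq.nonneg
    convert abs_rpow_sub_rpow_le_abs_sub_rpow hα₀.le hα₁ (sub_nonneg.2 hu.2) (sub_nonneg.2 hu.1)
      using 3
    ring
  have hF : Continuous fun u : ℝ => |c + a - 2 * u| ^ (α * p) :=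
    (continuous_const.sub (continuous_const_mul 2)).abs.rpow_const fun _ => Or.inr (by positivity)
  have hG : Continuous fun u : ℝ => (1 - (u - a) / (c - a)) * x + (u - a) / (c - a) * y := by
    fun_prop
  have holder := abs_integral_mul_le_of_rpow_le hpq
    (continuous_sub_rpow_sub_rpow_sub hα₀.le).aestronglyMeasurable hg
    hF.integrableOn_Ioc hG.integrableOn_Ioc
    (ae_restrict_of_forall_mem measurableSet_Ioc fun u hu => hwp u (Ioc_subset_Icc_self hu))
    (ae_restrict_of_forall_mem measurableSet_Ioc fun u hu => hgq u (Ioc_subset_Icc_self hu))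
  rw [← integral_of_le hac.le, ← integral_of_le hac.le, ← integral_of_le hac.le,
    integral_abs_add_sub_two_mul_rpow hac.le (by positivity),
    integral_linear_interpolation hac.ne] at holder
  refine holder.trans (le_of_eq ?_)
  have hx : 0 ≤ x := (Real.rpow_nonneg (abs_nonneg _) q).trans
    (by simpa using hgq a ⟨le_rfl, hac.le⟩)
  have hy : 0 ≤ y := (Real.rpow_nonneg (abs_nonneg _) q).trans
    (by simpa [sub_ne_zero.2 hac.ne'] using hgq c ⟨hac.le, le_rfl⟩)
  have hca : 0 < c - a := sub_pos.2 hac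
  have hexp : (α * p + 1) * (1 / p) + 1 / q = α + 1 := by
    rw [one_div, one_div, add_mul, mul_assoc, mul_inv_cancel₀ hpq.ne_zero, mul_one, one_mul,
      add_assoc, hpq.inv_add_inv_eq_one]
  rw [Real.div_rpow (by positivity) (by positivity),
    Real.mul_rpow hca.le (by positivity), ← Real.rpow_mul hca.le, div_mul_eq_mul_div,
    div_mul_eq_mul_div, ← mul_assoc, ← Real.rpow_add hca, hexp]

lemma sub_div_mem_Icc_zero_one {a h u : ℝ} (hh : 0 < h) (hu : u ∈ Icc a (a + h)) :
    (u - a) / h ∈ Icc (0 : ℝ) 1 :=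
  ⟨div_nonneg (sub_nonneg.2 hu.1) hh.le, (div_le_one hh).2 (by linarith [hu.2])⟩

lemma InvexSet.Icc_subset {A : Set ℝ} {η : ℝ → ℝ → ℝ} {a b : ℝ} (hA : InvexSet A η)
    (ha : a ∈ A) (hb : b ∈ A) (hη : 0 < η b a) : Icc a (a + η b a) ⊆ A := fun u hu => by
  simpa [div_mul_cancel₀ _ hη.ne'] using hA a ha b hb _ (sub_div_mem_Icc_zero_one hη hu)

lemma PreinvexOn.le_of_mem_Icc {A : Set ℝ} {η : ℝ → ℝ → ℝ} {g : ℝ → ℝ} {a b u : ℝ}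
    (hg : PreinvexOn A η g) (ha : a ∈ A) (hb : b ∈ A) (hη : 0 < η b a)
    (hu : u ∈ Icc a (a + η b a)) :
    g u ≤ (1 - (u - a) / η b a) * g a + (u - a) / η b a * g b := by
  have h := hg a ha b hb _ (sub_div_mem_Icc_zero_one hη hu)
  rwa [div_mul_cancel₀ _ hη.ne', add_sub_cancel] at h

theorem fractional_estimate_holder_preinvex_general
    (A : Set ℝ) (η : ℝ → ℝ → ℝ) (a b : ℝ) (f : ℝ → ℝ) (α p q : ℝ)
    (hinv : InvexSet A η) (ha : a ∈ A) (hb : b ∈ A)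
    (hab : a < a + η b a)
    (hdiff : ∀ x ∈ A, DifferentiableAt ℝ f x)
    (hint : IntervalIntegrable (deriv f) volume a (a + η b a))
    (hq : 1 < q) (hpq : 1 / p + 1 / q = 1)
    (hpre : PreinvexOn A η (fun x => |deriv f x| ^ q))
    (hα : α ∈ Set.Ioc (0:ℝ) 1) :
    |(f a + f (a + η b a)) / 2 -
        Real.Gamma (α + 1) / (2 * (η b a) ^ α) *
          (JL α a (a + η b a) f + JR α a (a + η b a) f)| ≤
      η b a / (2 * (α * p + 1) ^ (1 / p)) *
        ((|deriv f a| ^ q + |deriv f b| ^ q) / 2) ^ (1 / q) := by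
  have hη : 0 < η b a := by linarith
  have hpq' : p.HolderConjugate q :=
    (Real.holderConjugate_iff.2 ⟨hq, by simpa only [one_div, add_comm] using hpq⟩).symm
  have hf : ∀ x ∈ Icc a (a + η b a), DifferentiableAt ℝ f x :=
    fun x hx => hdiff x (hinv.Icc_subset ha hb hη hx)
  have hbound : ∀ u ∈ Icc a (a + η b a), |deriv f u| ^ q ≤
      (1 - (u - a) / η b a) * |deriv f a| ^ q + (u - a) / η b a * |deriv f b| ^ q :=
    fun u hu => hpre.le_of_mem_Icc ha hb hη hu
  have hηc : η b a = a + η b a - a := (add_sub_cancel_left a _).symm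
  generalize a + η b a = c at *
  rw [hηc] at hbound hη ⊢
  rw [fractional_trapezoid_identity hab hα.1 hf hint, abs_mul, abs_neg,
    abs_of_pos (by positivity)]
  calc _ ≤ 1 / (2 * (c - a) ^ α) * ((c - a) ^ (α + 1) / (α * p + 1) ^ (1 / p) *
        ((|deriv f a| ^ q + |deriv f b| ^ q) / 2) ^ (1 / q)) := by
        gcongr
        exact abs_integral_rpow_sub_rpow_mul_le hab hα.1 hα.2 hpq'
          (measurable_deriv f).aestronglyMeasurable hbound
    _ = _ := by
        rw [Real.rpow_add_one hη.ne']
        field_simp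

theorem fractional_estimate_holder_preinvex
    (A : Set ℝ) (η : ℝ → ℝ → ℝ) (a b : ℝ) (f : ℝ → ℝ) (α p q : ℝ)
    (hA : IsOpen A) (hinv : InvexSet A η) (ha : a ∈ A) (hb : b ∈ A)
    (hab : a < a + η b a)
    (hdiff : ∀ x ∈ A, DifferentiableAt ℝ f x)
    (hint : IntervalIntegrable (deriv f) volume a (a + η b a))
    (hq : 1 < q) (hpq : 1 / p + 1 / q = 1)
    (hpre : PreinvexOn A η (fun x => |deriv f x| ^ q))
    (hα : α ∈ Set.Ioc (0:ℝ) 1) :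
    |(f a + f (a + η b a)) / 2 -
        Real.Gamma (α + 1) / (2 * (η b a) ^ α) *
          (JL α a (a + η b a) f + JR α a (a + η b a) f)| ≤
      η b a / (2 * (α * p + 1) ^ (1 / p)) *
        ((|deriv f a| ^ q + |deriv f b| ^ q) / 2) ^ (1 / q) :=
  fractional_estimate_holder_preinvex_general A η a b f α p q hinv ha hb hab hdiff hint hq hpq hpre
    hα
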